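/- arXiv:2405.14096 — 2 statements merged into one kernel-verified Lean document; each statement's English description precedes it below -/
import Mathlib

section
/- Let p ≥ 2, let (Ω₀, P) be a probability space, and let X_1, …, X_N be independent, identically distributed real-valued random variables with E[|X_1|^p] < ∞. Then E[ |(1/N) Σ_{i=1}^N X_i − E[X_1]|^p ]^{1/p} ≤ 16 √p (E[|X_1|^p])^{1/p} / √N. -/
open MeasureTheory ProbabilityTheory
open scoped ENNReal
set_option linter.unusedVariables false



private lemma exp_le_quad {x : ℝ} (hx : |x| ≤ 1) : Real.exp x ≤ 1 + x + x ^ 2 := by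
  have h := Real.exp_bound hx (n := 2) (by norm_num)
  have hs : ∑ m ∈ Finset.range 2, x ^ m / m.factorial = 1 + x := by
    simp [Finset.sum_range_succ]
  rw [hs] at h
  have h2 : Real.exp x - (1 + x) ≤ |x| ^ 2 * (Nat.succ 2 / ((2).factorial * 2)) :=
    (abs_le.mp h).2
  have h3 : (|x| ^ 2 : ℝ) * (Nat.succ 2 / ((2).factorial * 2)) ≤ x ^ 2 := by
    rw [sq_abs]
    norm_num [Nat.factorial]
    nlinarith [sq_nonneg x]
  nlinarith

/-- Core scalar inequality: `|1+t|^p ≤ (1 + 4p t²)^(p/2) + p t` for `p ≥ 2`. -/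
private lemma core_ineq {p : ℝ} (hp : 2 ≤ p) (t : ℝ) :
    |1 + t| ^ p ≤ (1 + 4 * p * t ^ 2) ^ (p / 2) + p * t := by
  have hp0 : (0:ℝ) < p := by linarith
  have hp1 : (1:ℝ) ≤ p / 2 := by linarith
  rcases le_or_gt 0 t with ht | ht
  · -- t ≥ 0
    have hb : (0:ℝ) ≤ 4 * p * t ^ 2 := by positivity
    have bern : 1 + 2 * p ^ 2 * t ^ 2 ≤ (1 + 4 * p * t ^ 2) ^ (p / 2) := by
      have h := one_add_mul_self_le_rpow_one_add (s := 4 * p * t ^ 2) (by linarith) hp1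
      calc 1 + 2 * p ^ 2 * t ^ 2 = 1 + p / 2 * (4 * p * t ^ 2) := by ring
      _ ≤ _ := h
    have h1t : (0:ℝ) ≤ 1 + t := by linarith
    rw [abs_of_nonneg h1t]
    rcases le_or_gt (p * t) 1 with hpt | hpt
    · -- small t : use exp bound
      have e1 : (1 + t) ^ p ≤ Real.exp (p * t) := by
        calc (1 + t) ^ p ≤ (Real.exp t) ^ p :=
              Real.rpow_le_rpow h1t (by linarith [Real.add_one_le_exp t]) hp0.le
        _ = Real.exp (t * p) := (Real.exp_mul t p).symm
        _ = Real.exp (p * t) := by rw [mul_comm]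
      have e2 : Real.exp (p * t) ≤ 1 + p * t + (p * t) ^ 2 :=
        exp_le_quad (by rw [abs_of_nonneg (by positivity)]; exact hpt)
      have e3 : (p * t) ^ 2 ≤ 2 * p ^ 2 * t ^ 2 := by nlinarith [sq_nonneg (p*t)]
      linarith
    · -- large t : square comparison
      have hsq : (1 + t) ^ 2 ≤ 1 + 4 * p * t ^ 2 := by nlinarith
      have hrw : (1 + t) ^ p = ((1 + t) ^ (2:ℕ)) ^ (p / 2) := by
        rw [← Real.rpow_natCast (1+t) 2, ← Real.rpow_mul h1t]
        congr 1
        push_cast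
        ring
      rw [hrw]
      have h2 : ((1 + t) ^ (2:ℕ)) ^ (p / 2) ≤ (1 + 4 * p * t ^ 2) ^ (p / 2) :=
        Real.rpow_le_rpow (by positivity) hsq (by linarith)
      nlinarith [h2, mul_nonneg hp0.le ht]
  · -- t < 0 : write t = -u
    obtain ⟨u, rfl⟩ : ∃ u, t = -u := ⟨-t, (neg_neg t).symm⟩
    have hu0 : 0 < u := by linarith
    rw [show (1:ℝ) + -u = 1 - u by ring, show p * -u = -(p * u) by ring,
      show ((-u):ℝ) ^ 2 = u ^ 2 by ring]
    have hb : (0:ℝ) ≤ 4 * p * u ^ 2 := by positivity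
    have bern : 1 + 2 * p ^ 2 * u ^ 2 ≤ (1 + 4 * p * u ^ 2) ^ (p / 2) := by
      have h := one_add_mul_self_le_rpow_one_add (s := 4 * p * u ^ 2) (by linarith) hp1
      calc 1 + 2 * p ^ 2 * u ^ 2 = 1 + p / 2 * (4 * p * u ^ 2) := by ring
      _ ≤ _ := h
    rcases le_or_gt u 1 with hu1 | hu1
    · -- 0 < u ≤ 1
      have h1u : (0:ℝ) ≤ 1 - u := by linarith
      rw [abs_of_nonneg h1u]
      have e1 : (1 - u) ^ p ≤ Real.exp (-(p * u)) := by
        calc (1 - u) ^ p ≤ (Real.exp (-u)) ^ p := by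
              apply Real.rpow_le_rpow h1u _ hp0.le
              linarith [Real.add_one_le_exp (-u)]
        _ = Real.exp ((-u) * p) := (Real.exp_mul _ p).symm
        _ = Real.exp (-(p * u)) := by ring_nf
      have hpu0 : 0 < p * u := by positivity
      rcases le_or_gt (p * u) 1 with hpu | hpu
      · have e2 : Real.exp (-(p * u)) ≤ 1 - p * u + (p * u) ^ 2 := by
          have h := exp_le_quad (x := -(p*u))
            (by rw [abs_of_nonpos (by linarith)]; linarith)
          calc Real.exp (-(p*u)) ≤ 1 + (-(p*u)) + (-(p*u)) ^ 2 := h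
          _ = 1 - p * u + (p * u) ^ 2 := by ring
        have e3 : (p * u) ^ 2 ≤ 2 * p ^ 2 * u ^ 2 := by nlinarith [sq_nonneg (p*u)]
        linarith
      · -- p*u > 1
        have e2 : (1 - u) ^ p ≤ 1 := Real.rpow_le_one h1u (by linarith) hp0.le
        have e5 : 1 + p * u ≤ 1 + 2 * p ^ 2 * u ^ 2 := by nlinarith
        linarith
    · -- u > 1
      rw [abs_of_nonpos (by linarith : (1:ℝ) - u ≤ 0), show -(1 - u) = u - 1 by ring]
      have e1 : (u - 1) ^ p ≤ u ^ p :=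
        Real.rpow_le_rpow (by linarith) (by linarith) hp0.le
      have e2 : (4 * p * u ^ 2) ^ (p / 2) ≤ (1 + 4 * p * u ^ 2) ^ (p / 2) :=
        Real.rpow_le_rpow (by positivity) (by linarith) (by linarith)
      have e3 : (4 * p * u ^ 2) ^ (p / 2) = (4 * p) ^ (p / 2) * u ^ p := by
        rw [Real.mul_rpow (by positivity) (by positivity)]
        congr 1
        rw [← Real.rpow_natCast u 2, ← Real.rpow_mul (by linarith)]
        congr 1
        push_cast
        ring
      have e4 : 4 * p ≤ (4 * p) ^ (p / 2) := by
        calc 4 * p = (4 * p) ^ (1:ℝ) := (Real.rpow_one _).symm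
        _ ≤ (4 * p) ^ (p / 2) :=
            Real.rpow_le_rpow_of_exponent_le (by linarith) hp1
      have e5 : 1 ≤ u ^ p := Real.one_le_rpow (by linarith) hp0.le
      have e6 : u ≤ u ^ p := by
        calc u = u ^ (1:ℝ) := (Real.rpow_one _).symm
        _ ≤ u ^ p := Real.rpow_le_rpow_of_exponent_le (by linarith) (by linarith)
      have hup : (0:ℝ) ≤ u ^ p := le_trans zero_le_one e5
      have e7 : 4 * p * u ^ p ≤ (4 * p) ^ (p/2) * u ^ p :=
        mul_le_mul_of_nonneg_right e4 hup
      have key : u ^ p + p * u ≤ (4 * p) * u ^ p := by nlinarith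
      rw [e3] at e2
      linarith

private lemma sq_rpow_half {p : ℝ} (x : ℝ) : ((x ^ 2 : ℝ)) ^ (p / 2) = |x| ^ p := by
  rw [← sq_abs, ← Real.rpow_natCast |x| 2, ← Real.rpow_mul (abs_nonneg x)]
  congr 1
  push_cast
  ring

private lemma pointwise_aux {p : ℝ} (hp : 2 ≤ p) {s : ℝ} (hs : 0 < s) (y : ℝ) :
    |s + y| ^ p ≤ (s ^ 2 + 4 * p * y ^ 2) ^ (p / 2) + p * (|s| ^ (p - 2) * s * y) := by
  have hp0 : (0:ℝ) < p := by linarith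
  obtain ⟨t, rfl⟩ : ∃ t, y = s * t := ⟨y / s, by field_simp⟩
  have h1 : |s + s * t| ^ p = s ^ p * |1 + t| ^ p := by
    rw [show s + s * t = s * (1 + t) by ring, abs_mul, abs_of_pos hs,
      Real.mul_rpow hs.le (abs_nonneg _)]
  have hsp : s ^ p = ((s ^ 2 : ℝ)) ^ (p / 2) := by
    rw [← Real.rpow_natCast s 2, ← Real.rpow_mul hs.le]
    congr 1
    push_cast
    ring
  have h2 : s ^ p * (1 + 4 * p * t ^ 2) ^ (p / 2)
      = (s ^ 2 + 4 * p * (s * t) ^ 2) ^ (p / 2) := by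
    rw [show s ^ 2 + 4 * p * (s * t) ^ 2 = s ^ 2 * (1 + 4 * p * t ^ 2) by ring,
      Real.mul_rpow (by positivity) (by positivity), hsp]
  have h3 : s ^ p * (p * t) = p * (|s| ^ (p - 2) * s * (s * t)) := by
    rw [abs_of_pos hs]
    have hss : s ^ p = s ^ (p - 2) * s ^ (2:ℕ) := by
      rw [← Real.rpow_natCast s 2, ← Real.rpow_add hs]
      congr 1
      push_cast
      ring
    rw [hss]
    ring
  have hcore := core_ineq hp t
  calc |s + s * t| ^ p = s ^ p * |1 + t| ^ p := h1
  _ ≤ s ^ p * ((1 + 4 * p * t ^ 2) ^ (p / 2) + p * t) := by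
      apply mul_le_mul_of_nonneg_left hcore (Real.rpow_nonneg hs.le p)
  _ = s ^ p * (1 + 4 * p * t ^ 2) ^ (p / 2) + s ^ p * (p * t) := by ring
  _ = (s ^ 2 + 4 * p * (s * t) ^ 2) ^ (p / 2) + p * (|s| ^ (p - 2) * s * (s * t)) := by
      rw [h2, h3]

/-- Pointwise inequality `|s+y|^p ≤ (s² + 4p y²)^(p/2) + p |s|^(p-2) s y`. -/
private lemma pointwise_ineq {p : ℝ} (hp : 2 ≤ p) (s y : ℝ) :
    |s + y| ^ p ≤ (s ^ 2 + 4 * p * y ^ 2) ^ (p / 2) + p * (|s| ^ (p - 2) * s * y) := by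
  have hp0 : (0:ℝ) < p := by linarith
  rcases lt_trichotomy s 0 with hs | hs | hs
  · have h := pointwise_aux hp (s := -s) (by linarith) (-y)
    rw [show -s + -y = -(s + y) by ring, abs_neg, abs_neg,
      show ((-s):ℝ) ^ 2 = s ^ 2 by ring, show ((-y):ℝ) ^ 2 = y ^ 2 by ring] at h
    calc |s + y| ^ p ≤ (s ^ 2 + 4 * p * y ^ 2) ^ (p / 2)
        + p * (|s| ^ (p - 2) * -s * -y) := h
    _ = (s ^ 2 + 4 * p * y ^ 2) ^ (p / 2) + p * (|s| ^ (p - 2) * s * y) := by ring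
  · subst hs
    rw [show (0:ℝ) + y = y by ring, show (0:ℝ) ^ 2 + 4 * p * y ^ 2 = 4 * p * y ^ 2 by ring,
      show |(0:ℝ)| ^ (p - 2) * 0 * y = 0 by ring, mul_zero, add_zero]
    have h1 : (4 * p * y ^ 2 : ℝ) ^ (p / 2) = (4 * p) ^ (p / 2) * |y| ^ p := by
      rw [Real.mul_rpow (by positivity) (by positivity), sq_rpow_half]
    rw [h1]
    have h2 : (1:ℝ) ≤ (4 * p) ^ (p / 2) :=
      Real.one_le_rpow (by linarith) (by linarith)
    nlinarith [Real.rpow_nonneg (abs_nonneg y) p]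
  · exact pointwise_aux hp hs y

section MeasureHelpers

variable {Ω : Type*} [MeasurableSpace Ω] {P : MeasureTheory.Measure Ω} [IsProbabilityMeasure P]
set_option linter.unusedSectionVars false

private lemma int_rpow_of_memℒp {f : Ω → ℝ} {q : ℝ} (hq : 0 < q)
    (hm : MemLp f (ENNReal.ofReal q) P) :
    Integrable (fun ω => |f ω| ^ q) P := by
  simpa [Real.norm_eq_abs, ENNReal.toReal_ofReal hq.le] using
    hm.integrable_norm_rpow (by simp [ENNReal.ofReal_eq_zero]; linarith) ENNReal.ofReal_ne_top

private lemma eLpNorm_eq_ofReal {f : Ω → ℝ} (hf : AEStronglyMeasurable f P) {q : ℝ} (hq : 0 < q)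
    (hint : Integrable (fun ω => |f ω| ^ q) P) :
    eLpNorm f (ENNReal.ofReal q) P = ENNReal.ofReal ((∫ ω, |f ω| ^ q ∂P) ^ (1 / q)) := by
  have hq0 : ENNReal.ofReal q ≠ 0 := by simp [ENNReal.ofReal_eq_zero]; linarith
  have base : (∫⁻ ω, ‖f ω‖ₑ ^ q ∂P) = ENNReal.ofReal (∫ ω, |f ω| ^ q ∂P) := by
    rw [MeasureTheory.ofReal_integral_eq_lintegral_ofReal hint
      (Filter.Eventually.of_forall fun ω => Real.rpow_nonneg (abs_nonneg _) q)]
    apply lintegral_congr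
    intro ω
    rw [Real.enorm_eq_ofReal_abs, ← ENNReal.ofReal_rpow_of_nonneg (abs_nonneg _) hq.le]
  rw [eLpNorm_eq_lintegral_rpow_enorm_toReal hq0 ENNReal.ofReal_ne_top,
    ENNReal.toReal_ofReal hq.le, base,
    ← ENNReal.ofReal_rpow_of_nonneg (integral_nonneg fun ω => Real.rpow_nonneg (abs_nonneg _) q)
      (by positivity)]

private lemma memℒp_of_int_rpow {f : Ω → ℝ} (hf : AEStronglyMeasurable f P) {q : ℝ} (hq : 0 < q)
    (hint : Integrable (fun ω => |f ω| ^ q) P) :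
    MemLp f (ENNReal.ofReal q) P :=
  ⟨hf, by rw [eLpNorm_eq_ofReal hf hq hint]; exact ENNReal.ofReal_lt_top⟩

/-- Minkowski inequality in integral form. -/
private lemma minkowski_int {f g : Ω → ℝ} (hfm : AEStronglyMeasurable f P)
    (hgm : AEStronglyMeasurable g P) {q : ℝ} (hq : 1 ≤ q)
    (hfi : Integrable (fun ω => |f ω| ^ q) P) (hgi : Integrable (fun ω => |g ω| ^ q) P) :
    ∫ ω, |f ω + g ω| ^ q ∂P
      ≤ ((∫ ω, |f ω| ^ q ∂P) ^ (1 / q) + (∫ ω, |g ω| ^ q ∂P) ^ (1 / q)) ^ q := by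
  have hq0 : (0:ℝ) < q := by linarith
  have hmf : MemLp f (ENNReal.ofReal q) P := memℒp_of_int_rpow hfm hq0 hfi
  have hmg : MemLp g (ENNReal.ofReal q) P := memℒp_of_int_rpow hgm hq0 hgi
  have hms : MemLp (f + g) (ENNReal.ofReal q) P := hmf.add hmg
  have hsi : Integrable (fun ω => |f ω + g ω| ^ q) P := by
    have := int_rpow_of_memℒp hq0 hms
    simpa using this
  have tri : eLpNorm (f + g) (ENNReal.ofReal q) P
      ≤ eLpNorm f (ENNReal.ofReal q) P + eLpNorm g (ENNReal.ofReal q) P :=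
    eLpNorm_add_le hfm hgm (by simpa using ENNReal.ofReal_le_ofReal hq)
  have hA : (0:ℝ) ≤ (∫ ω, |f ω| ^ q ∂P) ^ (1 / q) := by positivity
  have hB : (0:ℝ) ≤ (∫ ω, |g ω| ^ q ∂P) ^ (1 / q) := by positivity
  rw [eLpNorm_eq_ofReal hms.aestronglyMeasurable hq0 (by simpa using hsi),
    eLpNorm_eq_ofReal hfm hq0 hfi, eLpNorm_eq_ofReal hgm hq0 hgi,
    ← ENNReal.ofReal_add hA hB] at tri
  have tri' : (∫ ω, |f ω + g ω| ^ q ∂P) ^ (1 / q)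
      ≤ (∫ ω, |f ω| ^ q ∂P) ^ (1 / q) + (∫ ω, |g ω| ^ q ∂P) ^ (1 / q) := by
    refine (ENNReal.ofReal_le_ofReal_iff (by positivity)).mp ?_
    simpa using tri
  have hint_nonneg : (0:ℝ) ≤ ∫ ω, |f ω + g ω| ^ q ∂P :=
    integral_nonneg fun ω => Real.rpow_nonneg (abs_nonneg _) q
  calc ∫ ω, |f ω + g ω| ^ q ∂P
      = (((∫ ω, |f ω + g ω| ^ q ∂P) ^ (1 / q)) : ℝ) ^ q := by
        rw [← Real.rpow_mul hint_nonneg, one_div, inv_mul_cancel₀ (ne_of_gt hq0),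
          Real.rpow_one]
  _ ≤ ((∫ ω, |f ω| ^ q ∂P) ^ (1 / q) + (∫ ω, |g ω| ^ q ∂P) ^ (1 / q)) ^ q :=
      Real.rpow_le_rpow (by positivity) tri' hq0.le

/-- `L¹`-norm is at most `Lq`-norm on a probability space, integral form. -/
private lemma int_abs_le_rpow {f : Ω → ℝ} (hfm : AEStronglyMeasurable f P) {q : ℝ} (hq : 1 ≤ q)
    (hfi : Integrable (fun ω => |f ω| ^ q) P) :
    ∫ ω, |f ω| ∂P ≤ (∫ ω, |f ω| ^ q ∂P) ^ (1 / q) := by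
  have hq0 : (0:ℝ) < q := by linarith
  have hmf : MemLp f (ENNReal.ofReal q) P := memℒp_of_int_rpow hfm hq0 hfi
  have hm1 : MemLp f 1 P := hmf.mono_exponent (by simpa using ENNReal.ofReal_le_ofReal hq)
  have h1 : Integrable f P := memLp_one_iff_integrable.mp hm1
  have cmp : eLpNorm f 1 P ≤ eLpNorm f (ENNReal.ofReal q) P :=
    eLpNorm_le_eLpNorm_of_exponent_le (by simpa using ENNReal.ofReal_le_ofReal hq) hfm
  have e1 : eLpNorm f 1 P = ENNReal.ofReal (∫ ω, |f ω| ∂P) := by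
    have : (1 : ℝ≥0∞) = ENNReal.ofReal (1:ℝ) := by simp
    rw [this, eLpNorm_eq_ofReal hfm one_pos (by simpa using h1.abs)]
    simp
  rw [e1, eLpNorm_eq_ofReal hfm hq0 hfi] at cmp
  exact (ENNReal.ofReal_le_ofReal_iff (by positivity)).mp cmp

end MeasureHelpers

private lemma abs_phi {p : ℝ} (hp : 2 ≤ p) (x : ℝ) : |(|x| ^ (p-2) * x)| = |x| ^ (p-1) := by
  rcases eq_or_ne x 0 with rfl | hx
  · rw [abs_zero, mul_zero, abs_zero, Real.zero_rpow (by linarith)]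
  · have hx0 : 0 < |x| := abs_pos.mpr hx
    rw [abs_mul, abs_of_nonneg (Real.rpow_nonneg (abs_nonneg x) _)]
    rw [show (p - 1) = (p - 2) + 1 by ring, Real.rpow_add hx0, Real.rpow_one]

private lemma quad_bound {p : ℝ} (hp : 2 ≤ p) (a b : ℝ) :
    (a ^ 2 + 4 * p * b ^ 2) ^ (p / 2)
      ≤ (1 + 4 * p) ^ (p / 2) * 2 ^ p * (|a| ^ p + |b| ^ p) := by
  have hp0 : (0:ℝ) < p := by linarith
  have h1 : (a ^ 2 + 4 * p * b ^ 2) ≤ (1 + 4 * p) * (|a| + |b|) ^ 2 := by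
    nlinarith [abs_nonneg a, abs_nonneg b, sq_abs a, sq_abs b, mul_nonneg (abs_nonneg a) (abs_nonneg b), sq_nonneg (|a| + |b|)]
  have h2 : (a ^ 2 + 4 * p * b ^ 2) ^ (p / 2) ≤ ((1 + 4 * p) * (|a| + |b|) ^ 2) ^ (p / 2) :=
    Real.rpow_le_rpow (by positivity) h1 (by linarith)
  have h3 : ((1 + 4 * p) * (|a| + |b|) ^ 2) ^ (p / 2)
      = (1 + 4 * p) ^ (p / 2) * (|a| + |b|) ^ p := by
    rw [Real.mul_rpow (by linarith) (sq_nonneg _)]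
    congr 1
    have h := sq_rpow_half (p := p) (abs a + abs b)
    have h2 : |abs a + abs b| = abs a + abs b := abs_of_nonneg (by positivity)
    rw [h2] at h
    exact h
  have h4 : (|a| + |b|) ^ p ≤ 2 ^ p * (|a| ^ p + |b| ^ p) := by
    rcases le_total |a| |b| with hab | hab
    · calc (|a| + |b|) ^ p ≤ (2 * |b|) ^ p :=
          Real.rpow_le_rpow (by positivity) (by linarith) hp0.le
      _ = 2 ^ p * |b| ^ p := Real.mul_rpow (by norm_num) (abs_nonneg b)
      _ ≤ 2 ^ p * (|a| ^ p + |b| ^ p) := by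
          have := Real.rpow_nonneg (abs_nonneg a) p
          have h2p : (0:ℝ) ≤ (2:ℝ) ^ p := Real.rpow_nonneg (by norm_num) p
          nlinarith
    · calc (|a| + |b|) ^ p ≤ (2 * |a|) ^ p :=
          Real.rpow_le_rpow (by positivity) (by linarith) hp0.le
      _ = 2 ^ p * |a| ^ p := Real.mul_rpow (by norm_num) (abs_nonneg a)
      _ ≤ 2 ^ p * (|a| ^ p + |b| ^ p) := by
          have := Real.rpow_nonneg (abs_nonneg b) p
          have h2p : (0:ℝ) ≤ (2:ℝ) ^ p := Real.rpow_nonneg (by norm_num) p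
          nlinarith
  calc (a ^ 2 + 4 * p * b ^ 2) ^ (p / 2) ≤ (1 + 4 * p) ^ (p / 2) * (|a| + |b|) ^ p := by
        rw [← h3]; exact h2
  _ ≤ (1 + 4 * p) ^ (p / 2) * (2 ^ p * (|a| ^ p + |b| ^ p)) := by
      apply mul_le_mul_of_nonneg_left h4 (Real.rpow_nonneg (by linarith) _)
  _ = (1 + 4 * p) ^ (p / 2) * 2 ^ p * (|a| ^ p + |b| ^ p) := by ring

section StepLemma

variable {Ω : Type*} [MeasurableSpace Ω] {P : MeasureTheory.Measure Ω} [IsProbabilityMeasure P]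
set_option linter.unusedSectionVars false

/-- One-step 2-smoothness type inequality for independent centered `g`. -/
private lemma step_ineq {p : ℝ} (hp : 2 ≤ p) {f g : Ω → ℝ}
    (hfm : Measurable f) (hgm : Measurable g)
    (hfl : MemLp f (ENNReal.ofReal p) P) (hgl : MemLp g (ENNReal.ofReal p) P)
    (hind : IndepFun f g P) (hg0 : ∫ ω, g ω ∂P = 0) :
    ∫ ω, |f ω + g ω| ^ p ∂P
      ≤ ((∫ ω, |f ω| ^ p ∂P) ^ (2 / p) + 4 * p * (∫ ω, |g ω| ^ p ∂P) ^ (2 / p)) ^ (p / 2) := by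
  have hp0 : (0:ℝ) < p := by linarith
  have hfp : Integrable (fun ω => |f ω| ^ p) P := int_rpow_of_memℒp hp0 hfl
  have hgp : Integrable (fun ω => |g ω| ^ p) P := int_rpow_of_memℒp hp0 hgl
  have hfgp : Integrable (fun ω => |f ω + g ω| ^ p) P := by
    simpa using int_rpow_of_memℒp hp0 (hfl.add hgl)
  -- the correction term
  have hφmeas : Measurable fun x : ℝ => |x| ^ (p - 2) * x := by fun_prop
  have hφf : Integrable (fun ω => |f ω| ^ (p - 2) * f ω) P := by
    have hf1 : MemLp f (ENNReal.ofReal (p - 1)) P :=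
      hfl.mono_exponent (ENNReal.ofReal_le_ofReal (by linarith))
    have hint : Integrable (fun ω => |f ω| ^ (p - 1)) P :=
      int_rpow_of_memℒp (by linarith) hf1
    refine hint.mono' ((hφmeas.comp hfm).aestronglyMeasurable) ?_
    filter_upwards with ω
    rw [Real.norm_eq_abs, abs_phi hp]
  have hg1 : Integrable g P := by
    refine memLp_one_iff_integrable.mp (hgl.mono_exponent ?_)
    simpa using ENNReal.ofReal_le_ofReal (by linarith : (1:ℝ) ≤ p)
  have hindφ : IndepFun (fun ω => |f ω| ^ (p - 2) * f ω) g P := by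
    have := hind.comp hφmeas measurable_id
    exact this
  have hprod : Integrable (fun ω => (|f ω| ^ (p - 2) * f ω) * g ω) P :=
    hindφ.integrable_mul hφf hg1
  have hquad : Integrable (fun ω => ((f ω) ^ 2 + 4 * p * (g ω) ^ 2) ^ (p / 2)) P := by
    refine Integrable.mono' (((hfp.add hgp).const_mul ((1 + 4 * p) ^ (p / 2) * 2 ^ p)))
      ?_ ?_
    · apply Measurable.aestronglyMeasurable
      fun_prop
    · filter_upwards with ω
      rw [Real.norm_eq_abs, abs_of_nonneg (Real.rpow_nonneg (by positivity) _)]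
      exact quad_bound hp (f ω) (g ω)
  -- integrate the pointwise inequality
  have key : ∫ ω, |f ω + g ω| ^ p ∂P
      ≤ ∫ ω, ((f ω) ^ 2 + 4 * p * (g ω) ^ 2) ^ (p / 2) ∂P := by
    have mono : ∫ ω, |f ω + g ω| ^ p ∂P
        ≤ ∫ ω, (((f ω) ^ 2 + 4 * p * (g ω) ^ 2) ^ (p / 2)
            + p * (|f ω| ^ (p - 2) * f ω * g ω)) ∂P := by
      refine integral_mono hfgp (hquad.add (hprod.const_mul p)) ?_
      intro ω
      exact pointwise_ineq hp (f ω) (g ω)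
    have spl : ∫ ω, (((f ω) ^ 2 + 4 * p * (g ω) ^ 2) ^ (p / 2)
            + p * (|f ω| ^ (p - 2) * f ω * g ω)) ∂P
        = ∫ ω, ((f ω) ^ 2 + 4 * p * (g ω) ^ 2) ^ (p / 2) ∂P
          + p * ∫ ω, (|f ω| ^ (p - 2) * f ω) * g ω ∂P := by
      rw [integral_add hquad (hprod.const_mul p), integral_const_mul]
    have zero : ∫ ω, |f ω| ^ (p - 2) * f ω * g ω ∂P = 0 := by
      have h : ∫ ω, |f ω| ^ (p - 2) * f ω * g ω ∂P
          = (∫ ω, |f ω| ^ (p - 2) * f ω ∂P) * ∫ ω, g ω ∂P :=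
        hindφ.integral_fun_mul_eq_mul_integral hφf.aestronglyMeasurable hg1.aestronglyMeasurable
      rw [h, hg0, mul_zero]
    rw [spl, zero, mul_zero, add_zero] at mono
    exact mono
  -- Minkowski with exponent p/2
  have hA : Integrable (fun ω => |(f ω) ^ 2| ^ (p / 2)) P := by
    refine hfp.congr ?_
    filter_upwards with ω
    rw [abs_of_nonneg (sq_nonneg (f ω)), sq_rpow_half]
  have hB : Integrable (fun ω => |4 * p * (g ω) ^ 2| ^ (p / 2)) P := by
    refine (hgp.const_mul ((4 * p) ^ (p / 2))).congr ?_
    filter_upwards with ω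
    rw [abs_of_nonneg (show (0:ℝ) ≤ 4 * p * g ω ^ 2 by positivity),
      Real.mul_rpow (show (0:ℝ) ≤ 4 * p by linarith) (sq_nonneg (g ω)), sq_rpow_half]
  have mink := minkowski_int (P := P) (f := fun ω => (f ω) ^ 2)
      (g := fun ω => 4 * p * (g ω) ^ 2)
      (by apply Measurable.aestronglyMeasurable; fun_prop)
      (by apply Measurable.aestronglyMeasurable; fun_prop)
      (q := p / 2) (by linarith) hA hB
  have habs2 : (1:ℝ) / (p / 2) = 2 / p := by
    rw [one_div, div_eq_mul_inv, mul_inv, inv_inv]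
    ring
  have eL : ∫ ω, |(f ω) ^ 2 + 4 * p * (g ω) ^ 2| ^ (p / 2) ∂P
      = ∫ ω, ((f ω) ^ 2 + 4 * p * (g ω) ^ 2) ^ (p / 2) ∂P := by
    apply integral_congr_ae
    filter_upwards with ω
    rw [abs_of_nonneg (show (0:ℝ) ≤ (f ω) ^ 2 + 4 * p * (g ω) ^ 2 by positivity)]
  have eA : ∫ ω, |(f ω) ^ 2| ^ (p / 2) ∂P = ∫ ω, |f ω| ^ p ∂P := by
    apply integral_congr_ae
    filter_upwards with ω
    rw [abs_of_nonneg (sq_nonneg (f ω)), sq_rpow_half]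
  have eB : ∫ ω, |4 * p * (g ω) ^ 2| ^ (p / 2) ∂P = (4 * p) ^ (p / 2) * ∫ ω, |g ω| ^ p ∂P := by
    rw [← integral_const_mul]
    apply integral_congr_ae
    filter_upwards with ω
    rw [abs_of_nonneg (show (0:ℝ) ≤ 4 * p * g ω ^ 2 by positivity),
      Real.mul_rpow (show (0:ℝ) ≤ 4 * p by linarith) (sq_nonneg (g ω)), sq_rpow_half]
  have hIg : ((4 * p) ^ (p / 2) * ∫ ω, |g ω| ^ p ∂P) ^ (2 / p)
      = 4 * p * (∫ ω, |g ω| ^ p ∂P) ^ (2 / p) := by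
    rw [Real.mul_rpow (Real.rpow_nonneg (by linarith) _)
      (integral_nonneg fun ω => Real.rpow_nonneg (abs_nonneg _) _),
      ← Real.rpow_mul (by linarith : (0:ℝ) ≤ 4 * p)]
    congr 1
    rw [show p / 2 * (2 / p) = 1 by field_simp, Real.rpow_one]
  rw [eL, eA, eB, habs2, hIg] at mink
  exact le_trans key mink

end StepLemma

section SumBound

variable {Ω : Type*} [MeasurableSpace Ω] {P : MeasureTheory.Measure Ω} [IsProbabilityMeasure P]
set_option linter.unusedSectionVars false

private lemma sum_bound {p : ℝ} (hp : 2 ≤ p) {N : ℕ} {Y : Fin N → Ω → ℝ}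
    (hYm : ∀ i, Measurable (Y i)) (hYl : ∀ i, MemLp (Y i) (ENNReal.ofReal p) P)
    (hYindep : iIndepFun Y P)
    (hY0 : ∀ i, ∫ ω, Y i ω ∂P = 0)
    {M : ℝ} (hM : 0 ≤ M)
    (hYM : ∀ i, (∫ ω, |Y i ω| ^ p ∂P) ^ (2 / p) ≤ M) :
    ∀ s : Finset (Fin N),
      ∫ ω, |∑ i ∈ s, Y i ω| ^ p ∂P ≤ (4 * p * s.card * M) ^ (p / 2) := by
  have hp0 : (0:ℝ) < p := by linarith
  intro s
  induction s using Finset.cons_induction with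
  | empty =>
    simp only [Finset.sum_empty, abs_zero, Real.zero_rpow (ne_of_gt hp0), integral_zero,
      Finset.card_empty, Nat.cast_zero, mul_zero, zero_mul]
    rw [Real.zero_rpow (by positivity : p / 2 ≠ 0)]
  | cons i s hi ih =>
    have hsum_m : Measurable (fun ω => ∑ j ∈ s, Y j ω) := by
      apply Finset.measurable_sum
      intro j _
      exact hYm j
    have hsum_l : MemLp (fun ω => ∑ j ∈ s, Y j ω) (ENNReal.ofReal p) P :=
      memLp_finset_sum s fun j _ => hYl j
    have hind : IndepFun (fun ω => ∑ j ∈ s, Y j ω) (Y i) P := by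
      have h := hYindep.indepFun_finsetSum_of_notMem hYm hi
      have h2 : (∑ j ∈ s, Y j) = fun ω => ∑ j ∈ s, Y j ω :=
        funext fun ω => Finset.sum_apply ω s Y
      rwa [h2] at h
    have step := step_ineq hp hsum_m (hYm i) hsum_l (hYl i) hind (hY0 i)
    have hInt_nonneg : (0:ℝ) ≤ ∫ ω, |∑ j ∈ s, Y j ω| ^ p ∂P :=
      integral_nonneg fun ω => Real.rpow_nonneg (abs_nonneg _) _
    have ihpow : (∫ ω, |∑ j ∈ s, Y j ω| ^ p ∂P) ^ (2 / p) ≤ 4 * p * s.card * M := by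
      calc (∫ ω, |∑ j ∈ s, Y j ω| ^ p ∂P) ^ (2 / p)
          ≤ ((4 * p * s.card * M) ^ (p / 2)) ^ (2 / p) :=
            Real.rpow_le_rpow hInt_nonneg ih (by positivity)
      _ = 4 * p * s.card * M := by
          rw [← Real.rpow_mul (by positivity), show p / 2 * (2 / p) = 1 by field_simp,
            Real.rpow_one]
    have hrw : ∀ ω, ∑ j ∈ Finset.cons i s hi, Y j ω = (∑ j ∈ s, Y j ω) + Y i ω := by
      intro ω
      rw [Finset.sum_cons, add_comm]
    calc ∫ ω, |∑ j ∈ Finset.cons i s hi, Y j ω| ^ p ∂P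
        = ∫ ω, |(∑ j ∈ s, Y j ω) + Y i ω| ^ p ∂P := by
          apply integral_congr_ae
          filter_upwards with ω
          rw [hrw ω]
    _ ≤ ((∫ ω, |∑ j ∈ s, Y j ω| ^ p ∂P) ^ (2 / p)
          + 4 * p * (∫ ω, |Y i ω| ^ p ∂P) ^ (2 / p)) ^ (p / 2) := step
    _ ≤ (4 * p * s.card * M + 4 * p * M) ^ (p / 2) := by
        apply Real.rpow_le_rpow _ _ (by positivity)
        · have h1 : (0:ℝ) ≤ (∫ ω, |Y i ω| ^ p ∂P) ^ (2 / p) :=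
            Real.rpow_nonneg (integral_nonneg fun ω => Real.rpow_nonneg (abs_nonneg _) _) _
          positivity
        · have h2 := hYM i
          have h3 : (0:ℝ) ≤ (∫ ω, |Y i ω| ^ p ∂P) ^ (2 / p) :=
            Real.rpow_nonneg (integral_nonneg fun ω => Real.rpow_nonneg (abs_nonneg _) _) _
          nlinarith [ihpow]
    _ = (4 * p * (Finset.cons i s hi).card * M) ^ (p / 2) := by
        rw [Finset.card_cons]
        push_cast
        ring_nf
  
end SumBound

/-- `p`-th moment concentration bound for averages of i.i.d. real random variables:
`E[|(1/N) Σ X_i - E X_1|^p]^{1/p} ≤ 16 √p (E[|X_1|^p])^{1/p} / √N`. -/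
theorem iid_average_moment_bound
    {Ω₀ : Type*} [MeasurableSpace Ω₀] (P : Measure Ω₀) [IsProbabilityMeasure P]
    (N : ℕ) (hN : 0 < N) (X : Fin N → Ω₀ → ℝ)
    (hmeas : ∀ i, Measurable (X i))
    (hindep : iIndepFun X P)
    (hident : ∀ i, IdentDistrib (X i) (X ⟨0, hN⟩) P P)
    (p : ℝ) (hp : 2 ≤ p)
    (hLp : MemLp (X ⟨0, hN⟩) (ENNReal.ofReal p) P) :
    (∫ ω, |(1 / (N : ℝ)) * ∑ i : Fin N, X i ω - ∫ ω', X ⟨0, hN⟩ ω' ∂P| ^ p ∂P) ^ (1 / p)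
      ≤ 16 * Real.sqrt p * (∫ ω, |X ⟨0, hN⟩ ω| ^ p ∂P) ^ (1 / p) / Real.sqrt N := by
  have hp0 : (0:ℝ) < p := by linarith
  have hp1 : (1:ℝ) ≤ p := by linarith
  have hNpos : (0:ℝ) < (N:ℝ) := by exact_mod_cast hN
  set i0 : Fin N := ⟨0, hN⟩ with hi0
  set m : ℝ := ∫ ω', X i0 ω' ∂P with hm
  -- ℒp membership of each Xᵢ
  have hXl : ∀ i, MemLp (X i) (ENNReal.ofReal p) P := fun i => (hident i).symm.memLp_snd hLp
  have hone_le : (1 : ℝ≥0∞) ≤ ENNReal.ofReal p := by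
    simpa using ENNReal.ofReal_le_ofReal hp1
  have hXint : ∀ i, Integrable (X i) P := fun i =>
    memLp_one_iff_integrable.mp ((hXl i).mono_exponent hone_le)
  have hEX : ∀ i, ∫ ω, X i ω ∂P = m := fun i => (hident i).integral_eq
  -- centered variables
  set Y : Fin N → Ω₀ → ℝ := fun i ω => X i ω - m with hYdef
  have hYm : ∀ i, Measurable (Y i) := fun i => (hmeas i).sub measurable_const
  have hYl : ∀ i, MemLp (Y i) (ENNReal.ofReal p) P := fun i => (hXl i).sub (memLp_const m)
  have hYindep : iIndepFun Y P := by
    have h := hindep.comp (fun _ => fun x : ℝ => x - m)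
      (fun _ => measurable_id.sub measurable_const)
    exact h
  have hY0 : ∀ i, ∫ ω, Y i ω ∂P = 0 := by
    intro i
    rw [hYdef]
    simp only
    rw [integral_sub (hXint i) (integrable_const m), hEX i, integral_const]
    simp
  have hYident : ∀ i, IdentDistrib (Y i) (Y i0) P P := fun i => (hident i).sub_const m
  have habs_meas : Measurable fun x : ℝ => |x| ^ p := by fun_prop
  have hYint_eq : ∀ i, ∫ ω, |Y i ω| ^ p ∂P = ∫ ω, |Y i0 ω| ^ p ∂P := fun i =>
    ((hYident i).comp habs_meas).integral_eq
  set J : ℝ := ∫ ω, |Y i0 ω| ^ p ∂P with hJ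
  have hJ0 : 0 ≤ J := integral_nonneg fun ω => Real.rpow_nonneg (abs_nonneg _) _
  set M : ℝ := J ^ (2 / p) with hM
  have hM0 : 0 ≤ M := Real.rpow_nonneg hJ0 _
  have hYM : ∀ i, (∫ ω, |Y i ω| ^ p ∂P) ^ (2 / p) ≤ M := fun i => by
    rw [hYint_eq i]
  have hsum := sum_bound hp hYm hYl hYindep hY0 hM0 hYM Finset.univ
  rw [Finset.card_univ, Fintype.card_fin] at hsum
  -- rewrite the LHS integrand
  have hpt : ∀ ω, (1 / (N : ℝ)) * ∑ i : Fin N, X i ω - m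
      = (1 / (N : ℝ)) * ∑ i : Fin N, Y i ω := by
    intro ω
    have hsub : ∑ i : Fin N, Y i ω = (∑ i : Fin N, X i ω) - N * m := by
      rw [hYdef]
      simp only
      rw [Finset.sum_sub_distrib, Finset.sum_const, Finset.card_univ, Fintype.card_fin,
        nsmul_eq_mul]
    rw [hsub]
    field_simp
  have hint_eq : ∫ ω, |(1 / (N : ℝ)) * ∑ i : Fin N, X i ω - m| ^ p ∂P
      = (1 / (N : ℝ)) ^ p * ∫ ω, |∑ i : Fin N, Y i ω| ^ p ∂P := by
    rw [← integral_const_mul]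
    apply integral_congr_ae
    filter_upwards with ω
    rw [hpt ω, abs_mul, abs_of_pos (by positivity : (0:ℝ) < 1 / (N:ℝ)),
      Real.mul_rpow (by positivity) (abs_nonneg _)]
  rw [hint_eq]
  -- bound the main factor
  have hI0 : 0 ≤ ∫ ω, |∑ i : Fin N, Y i ω| ^ p ∂P :=
    integral_nonneg fun ω => Real.rpow_nonneg (abs_nonneg _) _
  have main : ((1 / (N : ℝ)) ^ p * ∫ ω, |∑ i : Fin N, Y i ω| ^ p ∂P) ^ (1 / p)
      ≤ (1 / (N : ℝ)) * (4 * p * N * M) ^ ((1:ℝ) / 2) := by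
    rw [Real.mul_rpow (by positivity) hI0, ← Real.rpow_mul (by positivity : (0:ℝ) ≤ 1 / (N:ℝ)),
      mul_one_div, div_self (ne_of_gt hp0), Real.rpow_one]
    apply mul_le_mul_of_nonneg_left _ (by positivity)
    calc (∫ ω, |∑ i : Fin N, Y i ω| ^ p ∂P) ^ (1 / p)
        ≤ ((4 * p * N * M) ^ (p / 2)) ^ (1 / p) :=
          Real.rpow_le_rpow hI0 hsum (by positivity)
    _ = (4 * p * N * M) ^ ((1:ℝ) / 2) := by
        rw [← Real.rpow_mul (by positivity), show p / 2 * (1 / p) = 1 / 2 by field_simp]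
  -- compute the square root factor
  have hsqrtM : Real.sqrt M = J ^ (1 / p) := by
    rw [Real.sqrt_eq_rpow, hM, ← Real.rpow_mul hJ0,
      show 2 / p * (1 / 2) = 1 / p by ring]
  have hsqrt : (4 * p * (N : ℝ) * M) ^ ((1:ℝ) / 2)
      = 2 * Real.sqrt p * Real.sqrt N * J ^ (1 / p) := by
    rw [← Real.sqrt_eq_rpow, show (4 : ℝ) * p * N * M = 4 * (p * ((N:ℝ) * M)) by ring,
      Real.sqrt_mul (by norm_num : (0:ℝ) ≤ 4), Real.sqrt_mul hp0.le,
      Real.sqrt_mul hNpos.le, hsqrtM,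
      show Real.sqrt 4 = 2 by
        rw [show (4:ℝ) = 2 ^ 2 by norm_num, Real.sqrt_sq (by norm_num : (0:ℝ) ≤ 2)]]
    ring
  -- triangle inequality : J^{1/p} ≤ 2 K^{1/p}
  set K : ℝ := ∫ ω, |X i0 ω| ^ p ∂P with hKdef
  have hK0 : 0 ≤ K := integral_nonneg fun ω => Real.rpow_nonneg (abs_nonneg _) _
  have hKint : Integrable (fun ω => |X i0 ω| ^ p) P := int_rpow_of_memℒp hp0 hLp
  have hJK : J ^ (1 / p) ≤ 2 * K ^ (1 / p) := by
    have hconst_int : Integrable (fun _ : Ω₀ => |(-m : ℝ)| ^ p) P := integrable_const _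
    have mink2 := minkowski_int (P := P) (f := X i0) (g := fun _ => -m)
      hLp.aestronglyMeasurable aestronglyMeasurable_const hp1 hKint hconst_int
    have hconst_val : (∫ _ : Ω₀, |(-m : ℝ)| ^ p ∂P) = |m| ^ p := by
      rw [integral_const]
      simp [abs_neg]
    have hJ_eq : ∫ ω, |X i0 ω + -m| ^ p ∂P = J := by
      rw [hJ]
      apply integral_congr_ae
      filter_upwards with ω
      rw [hYdef]
      simp only
      rw [sub_eq_add_neg]
    rw [hJ_eq, hconst_val] at mink2
    have habs_m : (|m| ^ p) ^ (1 / p) = |m| := by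
      rw [← Real.rpow_mul (abs_nonneg m), mul_one_div, div_self (ne_of_gt hp0),
        Real.rpow_one]
    rw [habs_m] at mink2
    have hm_le : |m| ≤ K ^ (1 / p) := by
      have h1 : |m| ≤ ∫ ω, |X i0 ω| ∂P := by
        rw [hm]
        calc |∫ ω', X i0 ω' ∂P| = ‖∫ ω', X i0 ω' ∂P‖ := (Real.norm_eq_abs _).symm
        _ ≤ ∫ ω', ‖X i0 ω'‖ ∂P := norm_integral_le_integral_norm _
        _ = ∫ ω', |X i0 ω'| ∂P := by simp [Real.norm_eq_abs]
      exact h1.trans (int_abs_le_rpow hLp.aestronglyMeasurable hp1 hKint)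
    have hJle : J ^ (1 / p) ≤ K ^ (1 / p) + |m| := by
      calc J ^ (1 / p) ≤ ((K ^ (1 / p) + |m|) ^ p) ^ (1 / p) :=
            Real.rpow_le_rpow hJ0 mink2 (by positivity)
      _ = K ^ (1 / p) + |m| := by
          rw [← Real.rpow_mul (by positivity), mul_one_div, div_self (ne_of_gt hp0),
            Real.rpow_one]
    have hKp0 : 0 ≤ K ^ (1 / p) := Real.rpow_nonneg hK0 _
    linarith
  -- final assembly
  have hsN : (0:ℝ) < Real.sqrt N := Real.sqrt_pos.mpr hNpos
  have hsp : (0:ℝ) ≤ Real.sqrt p := Real.sqrt_nonneg p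
  have hKp0 : 0 ≤ K ^ (1 / p) := Real.rpow_nonneg hK0 _
  have hdiv : (1 / (N : ℝ)) * (2 * Real.sqrt p * Real.sqrt N * J ^ (1 / p))
      = 2 * Real.sqrt p * J ^ (1 / p) / Real.sqrt N := by
    rw [eq_div_iff (ne_of_gt hsN)]
    have hNN : Real.sqrt N * Real.sqrt N = (N:ℝ) := Real.mul_self_sqrt hNpos.le
    calc (1 / (N:ℝ)) * (2 * Real.sqrt p * Real.sqrt N * J ^ (1 / p)) * Real.sqrt N
        = (Real.sqrt N * Real.sqrt N) * ((1 / (N:ℝ)) * (2 * Real.sqrt p * J ^ (1 / p))) := by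
          ring
    _ = (N:ℝ) * ((1 / (N:ℝ)) * (2 * Real.sqrt p * J ^ (1 / p))) := by rw [hNN]
    _ = 2 * Real.sqrt p * J ^ (1 / p) := by
        field_simp
  calc ((1 / (N : ℝ)) ^ p * ∫ ω, |∑ i : Fin N, Y i ω| ^ p ∂P) ^ (1 / p)
      ≤ (1 / (N : ℝ)) * (4 * p * N * M) ^ ((1:ℝ) / 2) := main
  _ = 2 * Real.sqrt p * J ^ (1 / p) / Real.sqrt N := by rw [hsqrt, hdiv]
  _ ≤ 2 * Real.sqrt p * (2 * K ^ (1 / p)) / Real.sqrt N := by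
      gcongr
  _ = 4 * Real.sqrt p * K ^ (1 / p) / Real.sqrt N := by ring
  _ ≤ 16 * Real.sqrt p * K ^ (1 / p) / Real.sqrt N := by
      gcongr
      nlinarith [mul_nonneg hsp hKp0]
end

section
/- Let X be a separable normed real vector space equipped with its Borel σ-algebra, let μ be a finite measure on X, and suppose there exists α > 0 with ∫_X e^{α ‖u‖²} dμ(u) < ∞. Let κ > 0, C₀ > 0, and let Ψ : X → [0,∞) be measurable with Ψ(u) ≤ C₀ (1 + ‖u‖)^κ for all u ∈ X. Then there exist constants C' > 0 and γ > 0, depending only on α, C₀, κ and μ, such that for all real p ≥ 1, (∫_X Ψ(u)^{2p} dμ(u))^{1/(2p)} ≤ C' (1 + γ κ p)^κ. -/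
open MeasureTheory

lemma key_bound (α q t : ℝ) (hα : 0 < α) (hq : 0 < q) (ht : 0 ≤ t) :
    (1 + t) ^ q ≤ 2 ^ q * (1 + q / (2 * α)) ^ (q / 2) * Real.exp (α * t ^ 2) := by
  have hA : (1 : ℝ) ≤ (1 + q / (2 * α)) ^ (q / 2) :=
    Real.one_le_rpow (by have h := le_of_lt (div_pos hq (by positivity) : 0 < q / (2 * α)); linarith) (by positivity)
  have hE : (1 : ℝ) ≤ Real.exp (α * t ^ 2) :=
    Real.one_le_exp (by positivity)
  rcases le_total t 1 with h1 | h1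
  · have h2 : (1 + t) ^ q ≤ 2 ^ q :=
      Real.rpow_le_rpow (by linarith) (by linarith) hq.le
    calc (1 + t) ^ q ≤ 2 ^ q := h2
      _ = 2 ^ q * 1 * 1 := by ring
      _ ≤ 2 ^ q * (1 + q / (2 * α)) ^ (q / 2) * Real.exp (α * t ^ 2) := by
          apply mul_le_mul ?_ hE (by norm_num) (by positivity)
          exact mul_le_mul_of_nonneg_left hA (by positivity)
  · have ht0 : 0 < t := lt_of_lt_of_le one_pos h1
    have hlog : q * Real.log t ≤ α * t ^ 2 + (q / 2) * Real.log (1 + q / (2 * α)) := by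
      have h3 : Real.log (2 * α * t ^ 2 / q) ≤ 2 * α * t ^ 2 / q - 1 :=
        Real.log_le_sub_one_of_pos (by positivity)
      have h4 : Real.log (t ^ 2) = Real.log (2 * α * t ^ 2 / q) + Real.log (q / (2 * α)) := by
        rw [← Real.log_mul (by positivity) (by positivity)]
        congr 1
        field_simp
      have h5 : Real.log (q / (2 * α)) ≤ Real.log (1 + q / (2 * α)) :=
        Real.log_le_log (by positivity) (by linarith)
      have h6 : q * Real.log t = (q / 2) * Real.log (t ^ 2) := by
        rw [Real.log_pow]; push_cast; ring
      have h7 : (q / 2) * Real.log (2 * α * t ^ 2 / q) ≤ α * t ^ 2 := by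
        have h8 := mul_le_mul_of_nonneg_left h3 (by positivity : (0:ℝ) ≤ q / 2)
        have h9 : (q / 2) * (2 * α * t ^ 2 / q - 1) ≤ α * t ^ 2 := by
          have : (q / 2) * (2 * α * t ^ 2 / q) = α * t ^ 2 := by
            field_simp
          nlinarith
        linarith
      have h10 := mul_le_mul_of_nonneg_left h5 (by positivity : (0:ℝ) ≤ q / 2)
      rw [h6, h4]
      nlinarith
    have h8 : t ^ q ≤ (1 + q / (2 * α)) ^ (q / 2) * Real.exp (α * t ^ 2) := by
      rw [Real.rpow_def_of_pos ht0, Real.rpow_def_of_pos (by positivity), ← Real.exp_add]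
      exact Real.exp_le_exp.mpr (by linarith)
    calc (1 + t) ^ q ≤ (2 * t) ^ q := Real.rpow_le_rpow (by linarith) (by linarith) hq.le
      _ = 2 ^ q * t ^ q := Real.mul_rpow (by norm_num) ht0.le
      _ ≤ 2 ^ q * ((1 + q / (2 * α)) ^ (q / 2) * Real.exp (α * t ^ 2)) :=
          mul_le_mul_of_nonneg_left h8 (by positivity)
      _ = _ := by ring

/-- Moment estimate `‖Ψ‖_{L^{2p}(μ)} ≤ C'(1 + γκp)^κ` from the Gaussian-tail
assumption `∫ e^{α‖u‖²} dμ < ∞` and the polynomial growth `Ψ(u) ≤ C₀(1+‖u‖)^κ`. -/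
theorem moment_bound_of_gaussian_tail
    {X : Type*} [NormedAddCommGroup X] [NormedSpace ℝ X]
    [TopologicalSpace.SeparableSpace X]
    [MeasurableSpace X] [BorelSpace X]
    (μ : Measure X) [IsFiniteMeasure μ]
    (α : ℝ) (hα : 0 < α)
    (hexp : Integrable (fun u => Real.exp (α * ‖u‖ ^ 2)) μ)
    (κ C₀ : ℝ) (hκ : 0 < κ) (hC₀ : 0 < C₀)
    (Ψ : X → ℝ) (hΨmeas : Measurable Ψ) (hΨ0 : ∀ u, 0 ≤ Ψ u)
    (hΨbd : ∀ u, Ψ u ≤ C₀ * (1 + ‖u‖) ^ κ) :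
    ∃ C' > (0 : ℝ), ∃ γ > (0 : ℝ), ∀ p : ℝ, 1 ≤ p →
      (∫ u, Ψ u ^ (2 * p) ∂μ) ^ (1 / (2 * p)) ≤ C' * (1 + γ * κ * p) ^ κ := by
  set M := ∫ u, Real.exp (α * ‖u‖ ^ 2) ∂μ with hMdef
  have hM0 : 0 ≤ M := integral_nonneg fun u => (Real.exp_pos _).le
  have hMax1 : (1 : ℝ) ≤ max M 1 := le_max_right _ _
  refine ⟨C₀ * 2 ^ κ * max M 1, by positivity, 1 / α, by positivity, fun p hp => ?_⟩
  have hp0 : 0 < p := lt_of_lt_of_le one_pos hp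
  set q : ℝ := 2 * p * κ with hqdef
  have hq0 : 0 < q := by positivity
  set K : ℝ := C₀ * 2 ^ κ * (1 + κ * p / α) ^ (κ / 2) with hKdef
  have hK0 : 0 < K := by positivity
  have hKeq : K ^ (2 * p) = C₀ ^ (2 * p) * (2 ^ q * (1 + q / (2 * α)) ^ (q / 2)) := by
    have hbe : 1 + κ * p / α = 1 + q / (2 * α) := by
      rw [hqdef]; field_simp
    have e1 : ((2:ℝ) ^ κ) ^ (2 * p) = 2 ^ q := by
      rw [← Real.rpow_mul (by norm_num)]; congr 1; rw [hqdef]; ring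
    have e2 : ((1 + κ * p / α) ^ (κ / 2)) ^ (2 * p) = (1 + q / (2 * α)) ^ (q / 2) := by
      rw [← Real.rpow_mul (by positivity), hbe]
      congr 1
      rw [hqdef]; ring
    rw [hKdef, Real.mul_rpow (by positivity) (by positivity),
        Real.mul_rpow hC₀.le (by positivity), e1, e2]
    ring
  have hpt : ∀ u, Ψ u ^ (2 * p) ≤ K ^ (2 * p) * Real.exp (α * ‖u‖ ^ 2) := by
    intro u
    have h1 : Ψ u ^ (2 * p) ≤ (C₀ * (1 + ‖u‖) ^ κ) ^ (2 * p) :=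
      Real.rpow_le_rpow (hΨ0 u) (hΨbd u) (by positivity)
    have h2 : (C₀ * (1 + ‖u‖) ^ κ) ^ (2 * p) = C₀ ^ (2 * p) * (1 + ‖u‖) ^ q := by
      rw [Real.mul_rpow hC₀.le (by positivity), ← Real.rpow_mul (by positivity)]
      congr 2
      rw [hqdef]; ring
    have h3 := key_bound α q ‖u‖ hα hq0 (norm_nonneg u)
    calc Ψ u ^ (2 * p) ≤ C₀ ^ (2 * p) * (1 + ‖u‖) ^ q := by rw [← h2]; exact h1
      _ ≤ C₀ ^ (2 * p) * (2 ^ q * (1 + q / (2 * α)) ^ (q / 2) * Real.exp (α * ‖u‖ ^ 2)) :=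
          mul_le_mul_of_nonneg_left h3 (by positivity)
      _ = K ^ (2 * p) * Real.exp (α * ‖u‖ ^ 2) := by rw [hKeq]; ring
  have hmono : (∫ u, Ψ u ^ (2 * p) ∂μ) ≤ K ^ (2 * p) * M := by
    have h : (∫ u, Ψ u ^ (2 * p) ∂μ) ≤ ∫ u, K ^ (2 * p) * Real.exp (α * ‖u‖ ^ 2) ∂μ := by
      apply integral_mono_of_nonneg
      · exact Filter.Eventually.of_forall fun u => Real.rpow_nonneg (hΨ0 u) _
      · exact hexp.const_mul _
      · exact Filter.Eventually.of_forall hpt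
    rwa [integral_const_mul] at h
  have hint0 : 0 ≤ ∫ u, Ψ u ^ (2 * p) ∂μ :=
    integral_nonneg fun u => Real.rpow_nonneg (hΨ0 u) _
  have h5 : (∫ u, Ψ u ^ (2 * p) ∂μ) ^ (1 / (2 * p)) ≤ (K ^ (2 * p) * M) ^ (1 / (2 * p)) :=
    Real.rpow_le_rpow hint0 hmono (by positivity)
  have h6 : (K ^ (2 * p) * M) ^ (1 / (2 * p)) = K * M ^ (1 / (2 * p)) := by
    rw [Real.mul_rpow (by positivity) hM0, ← Real.rpow_mul hK0.le,
        mul_one_div, div_self (by positivity : (2:ℝ) * p ≠ 0), Real.rpow_one]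
  have h7 : M ^ (1 / (2 * p)) ≤ max M 1 := by
    calc M ^ (1 / (2 * p)) ≤ (max M 1) ^ (1 / (2 * p)) :=
          Real.rpow_le_rpow hM0 (le_max_left _ _) (by positivity)
      _ ≤ (max M 1) ^ (1 : ℝ) := by
          apply Real.rpow_le_rpow_of_exponent_le hMax1
          rw [div_le_one (by positivity)]; linarith
      _ = max M 1 := Real.rpow_one _
  have h8 : (1 + κ * p / α) ^ (κ / 2) ≤ (1 + 1 / α * κ * p) ^ κ := by
    have hbe : 1 + 1 / α * κ * p = 1 + κ * p / α := by ring
    rw [hbe]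
    exact Real.rpow_le_rpow_of_exponent_le
      (by have h := le_of_lt (div_pos (by positivity) hα : 0 < κ * p / α); linarith) (by linarith)
  calc (∫ u, Ψ u ^ (2 * p) ∂μ) ^ (1 / (2 * p)) ≤ K * M ^ (1 / (2 * p)) := by
        rw [← h6]; exact h5
    _ ≤ K * max M 1 := mul_le_mul_of_nonneg_left h7 hK0.le
    _ = C₀ * 2 ^ κ * max M 1 * (1 + κ * p / α) ^ (κ / 2) := by rw [hKdef]; ring
    _ ≤ C₀ * 2 ^ κ * max M 1 * (1 + 1 / α * κ * p) ^ κ :=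
        mul_le_mul_of_nonneg_left h8 (by positivity)
end
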